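/- Let G be a graph having a clique cutset decomposition tree of depth p ≥ 1 with splits (A_i, K_i, B_i) for 0 ≤ i ≤ p−1, set B_p = A_{p−1} and K_p = K_{p−1}, and let w be a function assigning a non-negative integer weight to each vertex of G (with w(A) denoting the sum of the weights over a vertex set A). Then one of the following holds: (1) for some i ∈ {0, 1, …, p−1}, K_i is a clique cutset of G for which there exists a split (A, K_i, B) of G with w(A) ≥ 2 and w(B) ≥ 2; or (2) for some i ∈ {0, 1, …, p}, every connected component C of G − (K_i ∪ B_i) satisfies w(C) ≤ 1. -/

import Mathlib

/-!
Walk down the decomposition tree keeping the invariant that every component of `G - V(Gᵢ)` has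
weight at most one and attaches to `Gᵢ` along a clique. From `Gᵢ` to `Gᵢ₊₁ = Gᵢ[Aᵢ ∪ Kᵢ]`, a new
component of `G - V(Gᵢ₊₁)` either is an old one or meets `Bᵢ`, and in the latter case (by the
invariant) it attaches to `Gᵢ₊₁` inside `Kᵢ`. If such a component is heavy, `Kᵢ` separates it
from the rest of `G`: either the rest is heavy too (alternative 1), or it is light and then so
is every component of `G - (Kᵢ ∪ Bᵢ)` (alternative 2). If no new component is heavy, the
invariant passes to `Gᵢ₊₁`; at `Gₚ` it yields the last alternative.
-/

open SimpleGraph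

universe u

variable {V : Type u}

/-- A hole: a chordless cycle of length at least 4. -/
def IsHole (G : SimpleGraph V) {v : V} (c : G.Walk v v) : Prop :=
  c.IsCycle ∧ 4 ≤ c.length ∧
    ∀ x ∈ c.support, ∀ y ∈ c.support, G.Adj x y → s(x, y) ∈ c.edges

/-- There is a hole of `G` passing through both `u` and `v`. -/
def HasHoleThrough (G : SimpleGraph V) (u v : V) : Prop :=
  ∃ (w : V) (c : G.Walk w w), IsHole G c ∧ u ∈ c.support ∧ v ∈ c.support

/-- `G` contains a theta as an induced subgraph: three internally vertex-disjoint
paths of length at least 2 between two distinct vertices, with no further edges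
among the vertices of the three paths. -/
def ContainsTheta (G : SimpleGraph V) : Prop :=
  ∃ (a b : V) (P₁ P₂ P₃ : G.Walk a b),
    a ≠ b ∧ P₁.IsPath ∧ P₂.IsPath ∧ P₃.IsPath ∧
    2 ≤ P₁.length ∧ 2 ≤ P₂.length ∧ 2 ≤ P₃.length ∧
    (∀ x ∈ P₁.support, x ∈ P₂.support → x = a ∨ x = b) ∧
    (∀ x ∈ P₁.support, x ∈ P₃.support → x = a ∨ x = b) ∧
    (∀ x ∈ P₂.support, x ∈ P₃.support → x = a ∨ x = b) ∧
    (∀ x y : V, (x ∈ P₁.support ∨ x ∈ P₂.support ∨ x ∈ P₃.support) →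
      (y ∈ P₁.support ∨ y ∈ P₂.support ∨ y ∈ P₃.support) → G.Adj x y →
      s(x, y) ∈ P₁.edges ∨ s(x, y) ∈ P₂.edges ∨ s(x, y) ∈ P₃.edges)

/-- `G` contains a wheel as an induced subgraph: a hole together with a vertex
having at least 3 neighbors on the hole. -/
def ContainsWheel (G : SimpleGraph V) : Prop :=
  ∃ (w : V) (c : G.Walk w w) (x y₁ y₂ y₃ : V),
    IsHole G c ∧ x ∉ c.support ∧
    y₁ ∈ c.support ∧ y₂ ∈ c.support ∧ y₃ ∈ c.support ∧
    y₁ ≠ y₂ ∧ y₁ ≠ y₃ ∧ y₂ ≠ y₃ ∧ G.Adj x y₁ ∧ G.Adj x y₂ ∧ G.Adj x y₃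

/-- `G` contains a diamond (K₄ minus an edge) as an induced subgraph. -/
def ContainsDiamond (G : SimpleGraph V) : Prop :=
  ∃ a b c d : V, a ≠ b ∧ a ≠ c ∧ a ≠ d ∧ b ≠ c ∧ b ≠ d ∧ c ≠ d ∧
    ¬ G.Adj a b ∧ G.Adj a c ∧ G.Adj a d ∧ G.Adj b c ∧ G.Adj b d ∧ G.Adj c d

/-- `G` contains a claw (K_{1,3}) as an induced subgraph. -/
def ContainsClaw (G : SimpleGraph V) : Prop :=
  ∃ u v₁ v₂ v₃ : V, v₁ ≠ v₂ ∧ v₁ ≠ v₃ ∧ v₂ ≠ v₃ ∧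
    G.Adj u v₁ ∧ G.Adj u v₂ ∧ G.Adj u v₃ ∧
    ¬ G.Adj v₁ v₂ ∧ ¬ G.Adj v₁ v₃ ∧ ¬ G.Adj v₂ v₃

/-- `(A, K, B)` is a split witnessing that `K` is a cutset of `G`:
`A` and `B` are nonempty, the three sets partition the vertex set,
and there are no edges between `A` and `B`. -/
def IsCutsetSplit (G : SimpleGraph V) (A K B : Set V) : Prop :=
  A.Nonempty ∧ B.Nonempty ∧ Disjoint A K ∧ Disjoint A B ∧ Disjoint K B ∧
    A ∪ K ∪ B = Set.univ ∧ ∀ a ∈ A, ∀ b ∈ B, ¬ G.Adj a b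

/-- `G` has a clique cutset. -/
def HasCliqueCutset (G : SimpleGraph V) : Prop :=
  ∃ K A B : Set V, G.IsClique K ∧ IsCutsetSplit G A K B

/-- Some clique cutset of `G` separates `u` and `v`. -/
def CliqueCutsetSeparates (G : SimpleGraph V) (u v : V) : Prop :=
  ∃ K A B : Set V, G.IsClique K ∧ IsCutsetSplit G A K B ∧ u ∈ A ∧ v ∈ B

/-- `G` has a star cutset: a nonempty cutset containing a vertex adjacent to
all other vertices of the cutset. -/
def HasStarCutset (G : SimpleGraph V) : Prop :=
  ∃ S A B : Set V, S.Nonempty ∧ IsCutsetSplit G A S B ∧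
    ∃ x ∈ S, ∀ y ∈ S, y ≠ x → G.Adj x y

/-- `u` and `v` are joined by a walk all of whose vertices lie in `X`. -/
def ReachableWithin (G : SimpleGraph V) (X : Set V) (u v : V) : Prop :=
  ∃ p : G.Walk u v, ∀ x ∈ p.support, x ∈ X

/-- `C` is a connected component of the subgraph of `G` induced by `X`. -/
def IsCompOf (G : SimpleGraph V) (X C : Set V) : Prop :=
  C.Nonempty ∧ C ⊆ X ∧ (∀ u ∈ C, ∀ v ∈ C, ReachableWithin G X u v) ∧
    ∀ u ∈ C, ∀ v ∈ X, G.Adj u v → v ∈ C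

/-- The subgraph of `G` induced by `A` is a disjoint union of cliques. -/
def UnionOfCliques (G : SimpleGraph V) (A : Set V) : Prop :=
  ∀ x ∈ A, ∀ y ∈ A, ∀ z ∈ A, G.Adj x y → G.Adj y z → x ≠ z → G.Adj x z

/-- `(X₁, X₂, A₁, A₂, B₁, B₂)` is a split of an almost 2-join of `G`. -/
def AlmostTwoJoinSplit (G : SimpleGraph V) (X₁ X₂ A₁ A₂ B₁ B₂ : Set V) : Prop :=
  Disjoint X₁ X₂ ∧ X₁ ∪ X₂ = Set.univ ∧ 3 ≤ X₁.ncard ∧ 3 ≤ X₂.ncard ∧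
  A₁.Nonempty ∧ B₁.Nonempty ∧ A₂.Nonempty ∧ B₂.Nonempty ∧
  A₁ ⊆ X₁ ∧ B₁ ⊆ X₁ ∧ A₂ ⊆ X₂ ∧ B₂ ⊆ X₂ ∧
  Disjoint A₁ B₁ ∧ Disjoint A₂ B₂ ∧
  (∀ a ∈ A₁, ∀ b ∈ A₂, G.Adj a b) ∧
  (∀ a ∈ B₁, ∀ b ∈ B₂, G.Adj a b) ∧
  (∀ x ∈ X₁, ∀ y ∈ X₂, G.Adj x y → (x ∈ A₁ ∧ y ∈ A₂) ∨ (x ∈ B₁ ∧ y ∈ B₂))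

/-- The subgraph of `G` induced by `X` is a chordless path. -/
def InducesPath (G : SimpleGraph V) (X : Set V) : Prop :=
  ∃ (u v : V) (p : G.Walk u v), p.IsPath ∧ (∀ x : V, x ∈ p.support ↔ x ∈ X) ∧
    ∀ x ∈ X, ∀ y ∈ X, G.Adj x y → s(x, y) ∈ p.edges

/-- `(X₁, X₂, A₁, A₂, B₁, B₂)` is a split of a 2-join of `G`. -/
def TwoJoinSplit (G : SimpleGraph V) (X₁ X₂ A₁ A₂ B₁ B₂ : Set V) : Prop :=
  AlmostTwoJoinSplit G X₁ X₂ A₁ A₂ B₁ B₂ ∧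
  (∃ a ∈ A₁, ∃ b ∈ B₁, ReachableWithin G X₁ a b) ∧
  (∃ a ∈ A₂, ∃ b ∈ B₂, ReachableWithin G X₂ a b) ∧
  (A₁.ncard = 1 → B₁.ncard = 1 → ¬ InducesPath G X₁) ∧
  (A₂.ncard = 1 → B₂.ncard = 1 → ¬ InducesPath G X₂)

/-- `(X₁, X₂, A₁, A₂, B₁, B₂)` is a split of a minimally-sided 2-join of `G`,
with `X₁` a minimal side. -/
def MinimallySidedTwoJoin (G : SimpleGraph V) (X₁ X₂ A₁ A₂ B₁ B₂ : Set V) : Prop :=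
  TwoJoinSplit G X₁ X₂ A₁ A₂ B₁ B₂ ∧
  ∀ Y₁ Y₂ C₁ C₂ D₁ D₂ : Set V, TwoJoinSplit G Y₁ Y₂ C₁ C₂ D₁ D₂ →
    ¬ Y₁ ⊂ X₁ ∧ ¬ Y₂ ⊂ X₁

/-- Conditions (i)–(iii) and (vi)–(viii) of consistency of an almost 2-join,
for the side `X` with special sets `A` and `B`. -/
def ConsistentSide (G : SimpleGraph V) (X A B : Set V) : Prop :=
  (∀ C : Set V, IsCompOf G X C → (C ∩ A).Nonempty ∧ (C ∩ B).Nonempty) ∧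
  (∀ a ∈ A, ∃ b ∈ B, ¬ G.Adj a b) ∧
  (∀ b ∈ B, ∃ a ∈ A, ¬ G.Adj b a) ∧
  (∀ u ∈ X, ∀ v ∈ X, ReachableWithin G X u v) ∧
  (∀ v ∈ X, ∃ b ∈ B, ∃ p : G.Walk v b, p.IsPath ∧ (∀ x ∈ p.support, x ∈ X) ∧
    ∀ x ∈ p.support, x ∈ A → x = v ∨ x = b) ∧
  (∀ v ∈ X, ∃ a ∈ A, ∃ p : G.Walk v a, p.IsPath ∧ (∀ x ∈ p.support, x ∈ X) ∧
    ∀ x ∈ p.support, x ∈ B → x = v ∨ x = a)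

/-- The block of decomposition of `G` with respect to a 2-join, keeping the side `X`
(with special sets `A`, `B`) and replacing the other side by a marker path of
length `k` whose endpoint `0` is complete to `A` and endpoint `k` is complete to `B`. -/
def TwoJoinBlock (G : SimpleGraph V) (X A B : Set V) (k : ℕ) :
    SimpleGraph (↥X ⊕ Fin (k + 1)) where
  Adj x y :=
    match x, y with
    | Sum.inl a, Sum.inl b => G.Adj ↑a ↑b
    | Sum.inl a, Sum.inr i => ((a : V) ∈ A ∧ i = 0) ∨ ((a : V) ∈ B ∧ i = Fin.last k)
    | Sum.inr i, Sum.inl a => ((a : V) ∈ A ∧ i = 0) ∨ ((a : V) ∈ B ∧ i = Fin.last k)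
    | Sum.inr i, Sum.inr j => (i : ℕ) + 1 = (j : ℕ) ∨ (j : ℕ) + 1 = (i : ℕ)
  symm := by
    constructor
    rintro (a | i) (b | j) h
    · exact h.symm
    · exact h
    · exact h
    · exact Or.symm h
  loopless := by
    constructor
    rintro (a | i) h
    · exact G.loopless.irrefl _ h
    · rcases h with h | h <;> omega

/-- A graph is chordless if no cycle in it has a chord. -/
def ChordlessGraph (G : SimpleGraph V) : Prop :=
  ∀ (u : V) (c : G.Walk u u), c.IsCycle →
    ∀ x ∈ c.support, ∀ y ∈ c.support, G.Adj x y → s(x, y) ∈ c.edges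

/-- The subgraph of `G` induced by `S` has a clique cutset. -/
def HasCliqueCutsetOn (G : SimpleGraph V) (S : Set V) : Prop :=
  ∃ K A B : Set V, G.IsClique K ∧ A.Nonempty ∧ B.Nonempty ∧ Disjoint A K ∧
    Disjoint A B ∧ Disjoint K B ∧ A ∪ K ∪ B = S ∧ ∀ a ∈ A, ∀ b ∈ B, ¬ G.Adj a b

/-- The total weight of a set of vertices. -/
noncomputable def wsum [Fintype V] (w : V → ℕ) (A : Set V) : ℕ :=
  ∑ v ∈ A.toFinite.toFinset, w v

def nbhdIn (G : SimpleGraph V) (C X : Set V) : Set V :=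
  {v | v ∈ X ∧ ∃ u ∈ C, G.Adj u v}

def LightCliqueAttached [Fintype V] (G : SimpleGraph V) (w : V → ℕ) (X : Set V) : Prop :=
  ∀ C : Set V, IsCompOf G Xᶜ C → wsum w C ≤ 1 ∧ G.IsClique (nbhdIn G C X)

section

variable {G : SimpleGraph V} {X Z C D : Set V}

lemma wsum_mono [Fintype V] (w : V → ℕ) {A B : Set V} (h : A ⊆ B) :
    wsum w A ≤ wsum w B :=
  Finset.sum_le_sum_of_subset (Set.Finite.toFinset_subset_toFinset.mpr h)

namespace ReachableWithin

lemma refl {u : V} (hu : u ∈ X) : ReachableWithin G X u u :=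
  ⟨.nil, by simpa using hu⟩

lemma symm {u v : V} (h : ReachableWithin G X u v) : ReachableWithin G X v u := by
  obtain ⟨p, hp⟩ := h
  exact ⟨p.reverse, fun x hx => hp x (by simpa using hx)⟩

lemma trans {u v z : V} (h : ReachableWithin G X u v) (h' : ReachableWithin G X v z) :
    ReachableWithin G X u z := by
  obtain ⟨p, hp⟩ := h
  obtain ⟨q, hq⟩ := h'
  refine ⟨p.append q, fun x hx => ?_⟩
  rw [SimpleGraph.Walk.mem_support_append_iff] at hx
  exact hx.elim (hp x) (hq x)

lemma of_adj {u v : V} (hu : u ∈ X) (hv : v ∈ X) (huv : G.Adj u v) :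
    ReachableWithin G X u v :=
  ⟨.cons huv .nil, by simp [hu, hv]⟩

lemma mem_right {u v : V} (h : ReachableWithin G X u v) : v ∈ X :=
  h.elim fun p hp => hp v p.end_mem_support

end ReachableWithin

lemma isCompOf_setOf_reachableWithin {c : V} (hc : c ∈ X) :
    IsCompOf G X {v | ReachableWithin G X c v} :=
  ⟨⟨c, .refl hc⟩, fun _ hv => hv.mem_right, fun _ hu _ hv => hu.symm.trans hv,
    fun _ hu _ hv huv => hu.trans (.of_adj hu.mem_right hv huv)⟩

lemma SimpleGraph.Walk.support_subset_of_closed {u v : V} (p : G.Walk u v)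
    (hcl : ∀ u ∈ C, ∀ v ∈ X, G.Adj u v → v ∈ C)
    (hp : ∀ x ∈ p.support, x ∈ X) (hu : u ∈ C) : ∀ x ∈ p.support, x ∈ C := by
  induction p with
  | nil => simpa using hu
  | cons huv q ih =>
    simp only [SimpleGraph.Walk.support_cons, List.mem_cons, forall_eq_or_imp] at hp ⊢
    exact ⟨hu, ih hp.2 (hcl _ hu _ (hp.2 _ q.start_mem_support) huv)⟩

lemma IsCompOf.subset_of_closed (hC : IsCompOf G X C)
    (hcl : ∀ u ∈ D, ∀ v ∈ X, G.Adj u v → v ∈ D) (hCD : (C ∩ D).Nonempty) : C ⊆ D := by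
  obtain ⟨c, hcC, hcD⟩ := hCD
  intro v hv
  obtain ⟨p, hp⟩ := hC.2.2.1 c hcC v hv
  exact p.support_subset_of_closed hcl hp hcD v p.end_mem_support

lemma IsCompOf.subset_setOf_reachableWithin (hC : IsCompOf G X C) (hCZ : C ⊆ Z)
    {c : V} (hc : c ∈ C) : C ⊆ {v | ReachableWithin G Z c v} := by
  intro v hv
  obtain ⟨p, hp⟩ := hC.2.2.1 c hc v hv
  exact ⟨p, fun x hx => hCZ (p.support_subset_of_closed hC.2.2.2 hp hc x hx)⟩

lemma IsCompOf.wsum_le_of_subset [Fintype V] {w : V → ℕ} {n : ℕ} (hC : IsCompOf G X C)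
    (hCZ : C ⊆ Z) (hZ : ∀ E, IsCompOf G Z E → wsum w E ≤ n) : wsum w C ≤ n := by
  obtain ⟨c, hc⟩ := hC.1
  exact (wsum_mono w (hC.subset_setOf_reachableWithin hCZ hc)).trans
    (hZ _ (isCompOf_setOf_reachableWithin (hCZ hc)))

end

section

variable {G : SimpleGraph V} {A K B D : Set V}

lemma compl_union_subset_of_forall_notMem (hD : D ⊆ (A ∪ K)ᶜ) (hDB : ∀ x ∈ D, x ∉ B) :
    D ⊆ (A ∪ K ∪ B)ᶜ :=
  fun x hx h => h.elim (hD hx) (hDB x hx)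

/-- A walk in `D` from a neighbour `u` of `a ∈ A` to `b` leaves the component of `u` in
`G - (A ∪ K ∪ B)` through a vertex of `B`; as that component attaches along a clique, this vertex
would be adjacent to `a`. -/
lemma nbhdIn_subset_of_mem_inter
    (hcl : ∀ E, IsCompOf G (A ∪ K ∪ B)ᶜ E → G.IsClique (nbhdIn G E (A ∪ K ∪ B)))
    (hAB : ∀ a ∈ A, ∀ b ∈ B, ¬ G.Adj a b) (hD : IsCompOf G (A ∪ K)ᶜ D) {b : V}
    (hbD : b ∈ D) (hbB : b ∈ B) : nbhdIn G D (A ∪ K) ⊆ K := by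
  rintro a ⟨haA | haK, u, huD, hua⟩
  swap
  · exact haK
  exfalso
  have huAK : u ∉ A ∪ K := hD.2.1 huD
  by_cases huX : u ∈ A ∪ K ∪ B
  · exact hAB a haA u (by simpa [huAK] using huX) hua.symm
  set E := {x | ReachableWithin G (A ∪ K ∪ B)ᶜ u x}
  obtain ⟨p, hp⟩ := hD.2.2.1 u huD b hbD
  obtain ⟨d, hd, hdE, hdE'⟩ := p.exists_boundary_dart E (.refl huX)
    (fun h => h.mem_right (Or.inr hbB))
  have hdAK : d.snd ∉ A ∪ K := hp _ (p.dart_snd_mem_support_of_mem_darts hd)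
  have hdX : d.snd ∈ A ∪ K ∪ B := by
    by_contra h
    exact hdE' (hdE.trans (.of_adj hdE.mem_right h d.adj))
  have hdB : d.snd ∈ B := by simpa [hdAK] using hdX
  have hE := hcl E (isCompOf_setOf_reachableWithin huX)
  have hne : a ≠ d.snd := fun h => hdAK (h ▸ Or.inl haA)
  exact hAB a haA _ hdB (hE ⟨Or.inl (Or.inl haA), u, .refl huX, hua⟩ ⟨hdX, _, hdE, d.adj⟩ hne)

lemma isCutsetSplit_of_nbhdIn_subset (hA : A.Nonempty) (hAK : Disjoint A K)
    (hD : IsCompOf G (A ∪ K)ᶜ D) (hND : nbhdIn G D (A ∪ K) ⊆ K) :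
    IsCutsetSplit G (K ∪ D)ᶜ K D := by
  obtain ⟨a, ha⟩ := hA
  refine ⟨⟨a, ?_⟩, hD.1, ?_, ?_, ?_, ?_, ?_⟩
  · exact fun h => h.elim (Set.disjoint_left.mp hAK ha) (fun h => hD.2.1 h (Or.inl ha))
  · exact Set.disjoint_left.mpr fun x hx hxK => hx (Or.inl hxK)
  · exact Set.disjoint_left.mpr fun x hx hxD => hx (Or.inr hxD)
  · exact Set.disjoint_left.mpr fun x hxK hxD => hD.2.1 hxD (Or.inr hxK)
  · ext x; simp only [Set.mem_union, Set.mem_compl_iff, Set.mem_univ, iff_true]; tauto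
  · intro x hx d hd hdx
    by_cases hxAK : x ∈ A ∪ K
    · exact hx (Or.inl (hND ⟨hxAK, d, hd, hdx.symm⟩))
    · exact hx (Or.inr (hD.2.2.2 d hd x hxAK hdx.symm))

end

section

variable [Fintype V] {G : SimpleGraph V} {w : V → ℕ} {A K B D : Set V}

lemma LightCliqueAttached.wsum_le_one_of_compl_light
    (hinv : LightCliqueAttached G w (A ∪ K ∪ B)) (hD : IsCompOf G (A ∪ K)ᶜ D)
    (hND : nbhdIn G D (A ∪ K) ⊆ K) (hlight : wsum w (K ∪ D)ᶜ ≤ 1) :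
    ∀ C, IsCompOf G (K ∪ B)ᶜ C → wsum w C ≤ 1 := by
  intro C hC
  by_cases hCD : (C ∩ D).Nonempty
  · have hDcl : ∀ u ∈ D, ∀ v ∈ (K ∪ B)ᶜ, G.Adj u v → v ∈ D := fun u hu v hv huv => by
      by_cases hvAK : v ∈ A ∪ K
      · exact absurd (Or.inl (hND ⟨hvAK, u, hu, huv⟩)) hv
      · exact hD.2.2.2 u hu v hvAK huv
    have hCD' := hC.subset_of_closed hDcl hCD
    refine hC.wsum_le_of_subset ?_ fun E hE => (hinv E hE).1
    exact compl_union_subset_of_forall_notMem (hCD'.trans hD.2.1)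
      fun x hx hxB => hC.2.1 hx (Or.inr hxB)
  · refine (wsum_mono w fun c hc => ?_).trans hlight
    exact fun h => h.elim (fun hcK => hC.2.1 hc (Or.inl hcK)) fun hcD => hCD ⟨c, hc, hcD⟩

lemma LightCliqueAttached.restrict (hinv : LightCliqueAttached G w (A ∪ K ∪ B))
    (hK : G.IsClique K) (hAB : ∀ a ∈ A, ∀ b ∈ B, ¬ G.Adj a b)
    (hlight : ∀ D, IsCompOf G (A ∪ K)ᶜ D → wsum w D ≤ 1) :
    LightCliqueAttached G w (A ∪ K) := by
  intro D hD
  refine ⟨hlight D hD, ?_⟩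
  by_cases hDB : ∃ b ∈ D, b ∈ B
  · obtain ⟨b, hbD, hbB⟩ := hDB
    exact hK.subset (nbhdIn_subset_of_mem_inter (fun E hE => (hinv E hE).2) hAB hD hbD hbB)
  · push Not at hDB
    obtain ⟨u, hu⟩ := hD.1
    have hDX := compl_union_subset_of_forall_notMem hD.2.1 hDB
    have hDE := hD.subset_setOf_reachableWithin hDX hu
    refine (hinv _ (isCompOf_setOf_reachableWithin (hDX hu))).2.subset ?_
    rintro v ⟨hv, u', hu', hu'v⟩
    exact ⟨Or.inl hv, u', hDE hu', hu'v⟩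

/-- A component of `G - (A ∪ K)` of weight at least two must meet `B`, and then it is cut off
from the rest of `G` by `K`. -/
theorem LightCliqueAttached.exists_heavy_split_or
    (hinv : LightCliqueAttached G w (A ∪ K ∪ B)) (hK : G.IsClique K) (hA : A.Nonempty)
    (hAK : Disjoint A K) (hAB : ∀ a ∈ A, ∀ b ∈ B, ¬ G.Adj a b) :
    (∃ A' B' : Set V, IsCutsetSplit G A' K B' ∧ 2 ≤ wsum w A' ∧ 2 ≤ wsum w B') ∨
    (∀ C, IsCompOf G (K ∪ B)ᶜ C → wsum w C ≤ 1) ∨ LightCliqueAttached G w (A ∪ K) := by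
  by_cases hheavy : ∃ D, IsCompOf G (A ∪ K)ᶜ D ∧ 2 ≤ wsum w D
  · obtain ⟨D, hD, hD2⟩ := hheavy
    obtain ⟨b, hbD, hbB⟩ : ∃ b ∈ D, b ∈ B := by
      by_contra! hDB
      have := hD.wsum_le_of_subset (compl_union_subset_of_forall_notMem hD.2.1 hDB)
        fun E hE => (hinv E hE).1
      omega
    have hND := nbhdIn_subset_of_mem_inter (fun E hE => (hinv E hE).2) hAB hD hbD hbB
    by_cases hrest : 2 ≤ wsum w (K ∪ D)ᶜ
    · exact Or.inl ⟨_, D, isCutsetSplit_of_nbhdIn_subset hA hAK hD hND, hrest, hD2⟩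
    · exact Or.inr (Or.inl (hinv.wsum_le_one_of_compl_light hD hND (by omega)))
  · push Not at hheavy
    exact Or.inr (Or.inr (hinv.restrict hK hAB fun D hD => by have := hheavy D hD; omega))

end

theorem stmt9_general {V : Type u} [Fintype V] (G : SimpleGraph V)
    (p : ℕ) (hp : 1 ≤ p) (A K B Vs : ℕ → Set V)
    (hV0 : Vs 0 = Set.univ)
    (hVsucc : ∀ i < p, Vs (i + 1) = A i ∪ K i)
    (hsplit : ∀ i < p, (A i).Nonempty ∧ (B i).Nonempty ∧
      Disjoint (A i) (K i) ∧ Disjoint (A i) (B i) ∧ Disjoint (K i) (B i) ∧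
      A i ∪ K i ∪ B i = Vs i ∧ G.IsClique (K i) ∧
      ∀ a ∈ A i, ∀ b ∈ B i, ¬ G.Adj a b)
    (w : V → ℕ) :
    (∃ i < p, ∃ A' B' : Set V, G.IsClique (K i) ∧ IsCutsetSplit G A' (K i) B' ∧
      2 ≤ wsum w A' ∧ 2 ≤ wsum w B') ∨
    (∃ i < p, ∀ C : Set V, IsCompOf G (K i ∪ B i)ᶜ C → wsum w C ≤ 1) ∨
    (∀ C : Set V, IsCompOf G (K (p - 1) ∪ A (p - 1))ᶜ C → wsum w C ≤ 1) := by
  have hdescent : ∀ i ≤ p,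
      ((∃ i < p, ∃ A' B' : Set V, G.IsClique (K i) ∧ IsCutsetSplit G A' (K i) B' ∧
        2 ≤ wsum w A' ∧ 2 ≤ wsum w B') ∨
      (∃ i < p, ∀ C : Set V, IsCompOf G (K i ∪ B i)ᶜ C → wsum w C ≤ 1)) ∨
      LightCliqueAttached G w (Vs i) := by
    intro i
    induction i with
    | zero => exact fun _ => Or.inr fun C hC => absurd (hC.2.1 hC.1.some_mem) (by simp [hV0])
    | succ i ih =>
      intro hi
      obtain ⟨hA, -, hAK, -, -, hVs, hK, hAB⟩ := hsplit i hi
      rcases ih (by omega) with hdone | hinv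
      · exact Or.inl hdone
      rw [← hVs] at hinv
      rcases hinv.exists_heavy_split_or hK hA hAK hAB with ⟨A', B', hAB'⟩ | hlight | hinv'
      · exact Or.inl (Or.inl ⟨i, hi, A', B', hK, hAB'⟩)
      · exact Or.inl (Or.inr ⟨i, hi, hlight⟩)
      · exact Or.inr (hVsucc i hi ▸ hinv')
  rcases hdescent p le_rfl with hdone | hinv
  · exact hdone.imp_right Or.inl
  · have hVp : Vs p = K (p - 1) ∪ A (p - 1) := by
      rw [Set.union_comm, ← hVsucc (p - 1) (by omega), Nat.sub_add_cancel hp]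
    exact Or.inr (Or.inr fun C hC => (hinv C (hVp ▸ hC)).1)

/-- Let G be a graph having a clique cutset decomposition tree of depth p ≥ 1 with
splits (Aᵢ, Kᵢ, Bᵢ) for 0 ≤ i ≤ p−1, set B_p = A_{p−1} and K_p = K_{p−1}, and let w
assign a non-negative integer weight to each vertex. Then either some Kᵢ is a clique
cutset of G admitting a split (A, Kᵢ, B) of G with w(A) ≥ 2 and w(B) ≥ 2, or for some
i ∈ {0, …, p} every connected component C of G − (Kᵢ ∪ Bᵢ) satisfies w(C) ≤ 1. -/
theorem stmt9 {V : Type u} [Fintype V] (G : SimpleGraph V)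
    (p : ℕ) (hp : 1 ≤ p) (A K B Vs : ℕ → Set V)
    (hV0 : Vs 0 = Set.univ)
    (hVsucc : ∀ i < p, Vs (i + 1) = A i ∪ K i)
    (hsplit : ∀ i < p, (A i).Nonempty ∧ (B i).Nonempty ∧
      Disjoint (A i) (K i) ∧ Disjoint (A i) (B i) ∧ Disjoint (K i) (B i) ∧
      A i ∪ K i ∪ B i = Vs i ∧ G.IsClique (K i) ∧
      ∀ a ∈ A i, ∀ b ∈ B i, ¬ G.Adj a b)
    (hleaf : ∀ i < p, ¬ HasCliqueCutsetOn G (K i ∪ B i))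
    (hlast : ¬ HasCliqueCutsetOn G (Vs p))
    (w : V → ℕ) :
    (∃ i < p, ∃ A' B' : Set V, G.IsClique (K i) ∧ IsCutsetSplit G A' (K i) B' ∧
      2 ≤ wsum w A' ∧ 2 ≤ wsum w B') ∨
    (∃ i < p, ∀ C : Set V, IsCompOf G (K i ∪ B i)ᶜ C → wsum w C ≤ 1) ∨
    (∀ C : Set V, IsCompOf G (K (p - 1) ∪ A (p - 1))ᶜ C → wsum w C ≤ 1) :=
  stmt9_general G p hp A K B Vs hV0 hVsucc hsplit w
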